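/- For all real z, the identity 2·Γ((1−iz)/2)/Γ(−iz/2) · Γ((iz+3)/2)/Γ((iz+2)/2) = (z − i)·tanh(πz/2) holds, where Γ is the complex Gamma function and i is the imaginary unit (with both sides interpreted as complex numbers, and the left side extended by continuity at z = 0 where it equals 0). -/

import Mathlib

/-!
Write `w = i z`. The functional equation turns `Γ((w+3)/2)` into `((w+1)/2) Γ((w+1)/2)`, after which
the left side is `(w+1)` times a quotient of two reflection products:
`Γ((1-w)/2) Γ((1+w)/2) = π / cos(πw/2)` and `Γ(-w/2) Γ(1+w/2) = -π / sin(πw/2)`.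
Hence it equals `-(w+1) tan(πw/2)`, and `tan(iπz/2) = i tanh(πz/2)` gives `(z - i) tanh(πz/2)`.
This holds at `z = 0` as well, so the limit statement is continuity of the right side.
-/

open Complex Filter

/-- Left-hand side: ratio of Gamma functions. -/
noncomputable def gammaSide (z : ℝ) : ℂ :=
  2 * (Complex.Gamma ((1 - Complex.I * z) / 2) / Complex.Gamma (-(Complex.I * z) / 2)) *
    (Complex.Gamma ((Complex.I * z + 3) / 2) / Complex.Gamma ((Complex.I * z + 2) / 2))

open Real

namespace Complex

theorem Gamma_one_sub_half_mul_Gamma_one_add_half (w : ℂ) :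
    Gamma ((1 - w) / 2) * Gamma ((1 + w) / 2) = π / cos (π * w / 2) := by
  rw [mul_comm, show (1 - w) / 2 = 1 - (1 + w) / 2 by ring, Gamma_mul_Gamma_one_sub,
    show (π : ℂ) * ((1 + w) / 2) = π * w / 2 + π / 2 by ring, sin_add_pi_div_two]

theorem Gamma_neg_half_mul_Gamma_add_two_half (w : ℂ) :
    Gamma (-w / 2) * Gamma ((w + 2) / 2) = -(π / sin (π * w / 2)) := by
  rw [show (w + 2) / 2 = 1 - -w / 2 by ring, Gamma_mul_Gamma_one_sub,
    show (π : ℂ) * (-w / 2) = -(π * w / 2) by ring, sin_neg, div_neg]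

theorem Gamma_half_ratios_eq_neg_mul_tan {w : ℂ} (hw : w ≠ -1) :
    2 * (Gamma ((1 - w) / 2) / Gamma (-w / 2)) * (Gamma ((w + 3) / 2) / Gamma ((w + 2) / 2)) =
      -(w + 1) * tan (π * w / 2) := by
  have hrec : Gamma ((w + 3) / 2) = (w + 1) / 2 * Gamma ((1 + w) / 2) := by
    rw [show (w + 3) / 2 = (w + 1) / 2 + 1 by ring, Gamma_add_one _ (by
      contrapose! hw; linear_combination 2 * hw), add_comm 1 w]
  have hpi : (π : ℂ) ≠ 0 := ofReal_ne_zero.mpr pi_ne_zero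
  calc 2 * (Gamma ((1 - w) / 2) / Gamma (-w / 2)) * (Gamma ((w + 3) / 2) / Gamma ((w + 2) / 2))
      = (w + 1) * ((Gamma ((1 - w) / 2) * Gamma ((1 + w) / 2)) /
          (Gamma (-w / 2) * Gamma ((w + 2) / 2))) := by
        rw [hrec]; ring
    _ = (w + 1) * ((π / cos (π * w / 2)) / -(π / sin (π * w / 2))) := by
        rw [Gamma_one_sub_half_mul_Gamma_one_add_half, Gamma_neg_half_mul_Gamma_add_two_half]
    _ = -(w + 1) * tan (π * w / 2) := by
        rw [tan_eq_sin_div_cos]; field_simp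

theorem continuousAt_tanh {x : ℂ} (hx : cosh x ≠ 0) : ContinuousAt tanh x := by
  rw [funext tanh_eq_sinh_div_cosh]
  exact continuous_sinh.continuousAt.div continuous_cosh.continuousAt hx

end Complex

theorem gammaSide_eq (z : ℝ) : gammaSide z = ((z : ℂ) - I) * Complex.tanh (π * z / 2) := by
  have hw : I * z ≠ -1 := fun h => by simpa using congrArg re h
  have htan : Complex.tan (π * (I * z) / 2) = Complex.tanh (π * z / 2) * I := by
    rw [← tan_mul_I]; ring_nf
  rw [gammaSide, Gamma_half_ratios_eq_neg_mul_tan hw, htan]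
  linear_combination -((z : ℂ) * Complex.tanh (π * z / 2)) * I_sq

/-- The characteristic exponent `Ψ(z) = (z − i) tanh(πz/2)` of the Lévy process
underlying the radial 3-dimensional Cauchy process, expressed via Gamma functions:
the identity holds for `z ≠ 0`, and the Gamma side extends by continuity to `0` at `z = 0`,
matching `Ψ(0) = 0`. -/
theorem gamma_identity_char_exponent :
    (∀ z : ℝ, z ≠ 0 →
        gammaSide z = ((z : ℂ) - Complex.I) * Complex.tanh (Real.pi * z / 2)) ∧
    Tendsto gammaSide (nhdsWithin 0 {(0 : ℝ)}ᶜ) (nhds 0) ∧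
    ((0 : ℂ) - Complex.I) * Complex.tanh (Real.pi * 0 / 2) = 0 := by
  have hcont : ContinuousAt gammaSide 0 := by
    rw [funext gammaSide_eq]
    exact (continuous_ofReal.continuousAt.sub continuousAt_const).mul
      ((continuousAt_tanh (x := 0) (by simp)).comp_of_eq (by fun_prop) (by simp))
  refine ⟨fun z _ => gammaSide_eq z, ?_, by simp⟩
  simpa [gammaSide_eq] using hcont.tendsto.mono_left (nhdsWithin_le_nhds (s := {(0 : ℝ)}ᶜ))
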